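/- If A_FF is invertible, then for any X, Y : Matrix C C ℂ one has (P·X·R_I)·(P·Y·R_I) = P·(X·Y)·R_I. Consequently the composition of two weighted FCF relaxation sweeps with weights ω₁ and ω₂ (each of the form P·(I - ω·A_Δ)·R_I) equals the single operator P·(I - ω₂·A_Δ)·(I - ω₁·A_Δ)·R_I, which is the error propagator of weighted FCFCF-relaxation. -/

import Mathlib

/-! Injection restriction is a left inverse of the ideal interpolation, `R_I * P = I_C`, because it
just reads off the identity block of `P`. Hence `X ↦ P * X * R_I` is multiplicative, and the two
relaxation sweeps collapse into one. -/

open Matrix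

namespace Matrix

variable {R : Type*} [Semiring R] {m n : Type*} [Fintype m] [Fintype n]

theorem fromCols_zero_one_mul_fromRows [DecidableEq n] (B : Matrix m n R) :
    fromCols (0 : Matrix n m R) (1 : Matrix n n R) * fromRows B (1 : Matrix n n R) = 1 := by
  rw [fromCols_mul_fromRows, Matrix.zero_mul, zero_add, Matrix.one_mul]

theorem mul_mul_mul_mul_of_mul_eq_one [DecidableEq n] {l : Type*} [Fintype l]
    {P : Matrix l n R} {Q : Matrix n l R} (hQP : Q * P = 1) (X Y : Matrix n n R) :
    (P * X * Q) * (P * Y * Q) = P * (X * Y) * Q := by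
  calc (P * X * Q) * (P * Y * Q) = P * X * (Q * P) * Y * Q := by simp only [Matrix.mul_assoc]
    _ = P * (X * Y) * Q := by rw [hQP, Matrix.mul_one, Matrix.mul_assoc P X Y]

end Matrix

theorem stmt_3_general {F C : Type*} [Fintype F] [Fintype C] [DecidableEq F] [DecidableEq C]
    (AFF : Matrix F F ℂ) (AFC : Matrix F C ℂ)
    (P : Matrix (F ⊕ C) C ℂ) (hP : P = Matrix.fromRows (-(AFF⁻¹ * AFC)) 1)
    (RI : Matrix C (F ⊕ C) ℂ) (hRI : RI = Matrix.fromCols 0 1)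
    (AΔ : Matrix C C ℂ)
    (ω₁ ω₂ : ℂ) :
    (∀ X Y : Matrix C C ℂ, (P * X * RI) * (P * Y * RI) = P * (X * Y) * RI) ∧
    (P * ((1 : Matrix C C ℂ) - ω₂ • AΔ) * RI) * (P * ((1 : Matrix C C ℂ) - ω₁ • AΔ) * RI) =
      P * (((1 : Matrix C C ℂ) - ω₂ • AΔ) * ((1 : Matrix C C ℂ) - ω₁ • AΔ)) * RI := by
  have hRIP : RI * P = 1 := by
    rw [hP, hRI, fromCols_zero_one_mul_fromRows]
  exact ⟨mul_mul_mul_mul_of_mul_eq_one hRIP, mul_mul_mul_mul_of_mul_eq_one hRIP _ _⟩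

theorem stmt_3 {F C : Type*} [Fintype F] [Fintype C] [DecidableEq F] [DecidableEq C]
    (AFF : Matrix F F ℂ) (AFC : Matrix F C ℂ) (ACF : Matrix C F ℂ) (ACC : Matrix C C ℂ)
    (hFF : IsUnit AFF)
    (P : Matrix (F ⊕ C) C ℂ) (hP : P = Matrix.fromRows (-(AFF⁻¹ * AFC)) 1)
    (RI : Matrix C (F ⊕ C) ℂ) (hRI : RI = Matrix.fromCols 0 1)
    (AΔ : Matrix C C ℂ) (hAΔ : AΔ = ACC - ACF * AFF⁻¹ * AFC)
    (ω₁ ω₂ : ℂ) :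
    (∀ X Y : Matrix C C ℂ, (P * X * RI) * (P * Y * RI) = P * (X * Y) * RI) ∧
    (P * ((1 : Matrix C C ℂ) - ω₂ • AΔ) * RI) * (P * ((1 : Matrix C C ℂ) - ω₁ • AΔ) * RI) =
      P * (((1 : Matrix C C ℂ) - ω₂ • AΔ) * ((1 : Matrix C C ℂ) - ω₁ • AΔ)) * RI :=
  stmt_3_general AFF AFC P hP RI hRI AΔ ω₁ ω₂
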